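/- For the cone S over the rational normal curve of degree 4 in ℙ⁴ (Pinkham's example), with the natural grading on Ω^i_{S,0} (with dx_j of degree 0), the graded Euler characteristic evaluated at t = 1 of (Ω•_{S,0}, ∧dℓ) for generic linear ℓ equals 13; since the radial index of dℓ is 3, the invariant ν(S,0) = 13 − 3 = 10. -/

import Mathlib

/-- Coefficients of the Poincaré series P₀(t) = 1 + 5t + 9t² + 13t³ + … (coefficient
4k+1 in degree k ≥ 1) of the graded module Ω⁰_{S,0} = 𝒪_{S,0} for the cone S over the
rational normal curve of degree 4 in ℙ⁴ (the dx_j are given degree 0). -/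
def pinkhamP0 : ℕ → ℤ := fun k => if k = 0 then 1 else 4 * k + 1

/-- Coefficients of P₁(t) = 5 + 19t + 24t² + 32t³ + … (coefficient 8k+8 for k ≥ 2)
of the graded module Ω¹_{S,0}. -/
def pinkhamP1 : ℕ → ℤ := fun k => if k = 0 then 5 else if k = 1 then 19 else 8 * k + 8

/-- Coefficients of P₂(t) = 10 + 21t + 15t² + 19t³ + … (coefficient 4k+7 for k ≥ 2)
of the graded module Ω²_{S,0}. -/
def pinkhamP2 : ℕ → ℤ := fun k => if k = 0 then 10 else if k = 1 then 21 else 4 * k + 7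

/-!
In degrees `k ≥ 2` the coefficients of `P₀ - P₁ + P₂` cancel, `(4k+1) - (8k+8) + (4k+7) = 0`,
so the Euler characteristic is the sum of the degree-0 and degree-1 terms,
`(1 - 5 + 10) + (5 - 19 + 21) = 6 + 7 = 13`, and `ν = 13 - 3 = 10`.
-/

theorem pinkham_euler_coeff_eq_zero {k : ℕ} (hk : 2 ≤ k) :
    pinkhamP0 k - pinkhamP1 k + pinkhamP2 k = 0 := by
  simp only [pinkhamP0, pinkhamP1, pinkhamP2, if_neg (show k ≠ 0 by omega),
    if_neg (show k ≠ 1 by omega)]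
  ring

theorem pinkham_euler_support_subset_range_two :
    (Function.support fun k => pinkhamP0 k - pinkhamP1 k + pinkhamP2 k) ⊆ ↑(Finset.range 2) := by
  intro k hk
  by_contra hk_lt
  exact hk (pinkham_euler_coeff_eq_zero (by simp at hk_lt; omega))

theorem finsum_pinkham_euler :
    ∑ᶠ k : ℕ, (pinkhamP0 k - pinkhamP1 k + pinkhamP2 k) = 13 := by
  rw [finsum_eq_finsetSum_of_support_subset _ pinkham_euler_support_subset_range_two]
  decide

theorem pinkham_cone_homological_index_and_nu
    (IndHom IndRad ν : ℤ)
    (h_IndHom : IndHom = ∑ᶠ k : ℕ, (pinkhamP0 k - pinkhamP1 k + pinkhamP2 k))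
    (h_IndRad : IndRad = 3)
    (h_ν : ν = IndHom - IndRad) :
    IndHom = 13 ∧ ν = 10 := by
  rw [finsum_pinkham_euler] at h_IndHom
  exact ⟨h_IndHom, by rw [h_ν, h_IndHom, h_IndRad]; norm_num⟩
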